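/- For every d ≥ 1 and n ≥ 1, the number P_d(n) of d-dimensional n×⋯×n partitions with entries in {0,...,n} satisfies P_d(n) ≥ 2^{(2/3)·n^d/√(d+1)}. -/

import Mathlib

/-!
A finite set `s` of points of `[n]^(d+1)` yields the antitone function
`y ↦ max {w_last + 1 | w ∈ s, y ≤ init w}` on `[n]^d`, the height profile of the lower
closure of `s`. An antichain is the set of maximal elements of its lower closure, so distinct
antichains give distinct partitions. Every subset of a level `{x | ∑ xᵢ = k}` is an antichain,
hence `P_d(n) ≥ 2^#level`.

A large level exists by Chebyshev's inequality: `2∑ xᵢ - (d+1)(n-1)` has mean square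
`(d+1)(n²-1)/3`, so with `v` the integer nearest to `n√(d+1)` at most about a third of the points
satisfy `|2∑ xᵢ - (d+1)(n-1)| ≥ v`, while the others lie on at most `v` levels. The largest of
these has at least `(2/3)·n^d/√(d+1)` points.
-/

/-- `P_d(n)`: the number of `d`-dimensional `n × ⋯ × n` partitions with entries in
`{0,…,n}`, i.e. functions `[n]^d → {0,…,n}` weakly decreasing in each coordinate. -/
noncomputable def Pnum (d n : ℕ) : ℕ :=
  Nat.card {A : (Fin d → Fin n) → Fin (n + 1) // Antitone A}

open Finset

section LowerClosureHeight

variable {d n : ℕ}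

theorem Fin.le_iff_init_le_and_last_le {α : Type*} [Preorder α] {x w : Fin (d + 1) → α} :
    x ≤ w ↔ Fin.init x ≤ Fin.init w ∧ x (Fin.last d) ≤ w (Fin.last d) := by
  simp [Pi.le_def, Fin.forall_iff_castSucc, Fin.init, and_comm]

open scoped Classical in
noncomputable def lowerClosureHeight (s : Finset (Fin (d + 1) → Fin n)) (y : Fin d → Fin n) :
    Fin (n + 1) :=
  {w ∈ s | y ≤ Fin.init w}.sup fun w => (w (Fin.last d)).succ

theorem antitone_lowerClosureHeight (s : Finset (Fin (d + 1) → Fin n)) :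
    Antitone (lowerClosureHeight s) := fun _ _ hy =>
  sup_mono fun _ hw => by
    simp only [mem_filter] at hw ⊢
    exact ⟨hw.1, hy.trans hw.2⟩

theorem succ_last_le_lowerClosureHeight_iff {s : Finset (Fin (d + 1) → Fin n)}
    {x : Fin (d + 1) → Fin n} :
    (x (Fin.last d)).succ ≤ lowerClosureHeight s (Fin.init x) ↔
      x ∈ lowerClosure (s : Set (Fin (d + 1) → Fin n)) := by
  rw [lowerClosureHeight, Finset.le_sup_iff (Fin.succ_pos _)]
  simp [Fin.le_iff_init_le_and_last_le, and_assoc]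

theorem lowerClosureHeight_injOn :
    Set.InjOn lowerClosureHeight {s : Finset (Fin (d + 1) → Fin n) |
      IsAntichain (· ≤ ·) (s : Set (Fin (d + 1) → Fin n))} := by
  intro s hs t ht hst
  have hcl : lowerClosure (s : Set (Fin (d + 1) → Fin n)) = lowerClosure t := by
    ext x
    rw [SetLike.mem_coe, SetLike.mem_coe, ← succ_last_le_lowerClosureHeight_iff,
      ← succ_last_le_lowerClosureHeight_iff, hst]
  ext x
  rw [← mem_coe, ← mem_coe, ← hs.maximal_mem_lowerClosure_iff_mem,
    ← ht.maximal_mem_lowerClosure_iff_mem, hcl]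

theorem two_pow_card_le_Pnum {s : Finset (Fin (d + 1) → Fin n)}
    (hs : IsAntichain (· ≤ ·) (s : Set (Fin (d + 1) → Fin n))) : 2 ^ #s ≤ Pnum d n := by
  classical
  rw [Pnum, Nat.card_eq_fintype_card, ← card_powerset, ← card_univ]
  refine card_le_card_of_injOn (fun t => ⟨lowerClosureHeight t, antitone_lowerClosureHeight t⟩)
    (fun _ _ => mem_coe.2 (mem_univ _)) fun t ht u hu htu => ?_
  exact lowerClosureHeight_injOn (hs.subset (mem_powerset.1 ht))
    (hs.subset (mem_powerset.1 hu)) (congrArg Subtype.val htu)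

end LowerClosureHeight

def level (ι : Type*) [Fintype ι] [DecidableEq ι] (n k : ℕ) : Finset (ι → Fin n) :=
  {x | ∑ i, (x i : ℕ) = k}

theorem isAntichain_level (ι : Type*) [Fintype ι] [DecidableEq ι] (n k : ℕ) :
    IsAntichain (· ≤ ·) (level ι n k : Set (ι → Fin n)) := by
  intro x hx y hy hxy hle
  have hlt : ∑ i, (x i : ℕ) < ∑ i, (y i : ℕ) :=
    Fintype.sum_strictMono <| Pi.lt_def.2 ⟨fun i => hle i, (Pi.lt_def.1 (hle.lt_of_ne hxy)).2⟩
  simp_all [level]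

theorem Finset.exists_card_le_mul_card_fiber {α β : Type*} [DecidableEq β] [Nonempty β]
    {s : Finset α} {t : Finset β} {f : α → β} (hf : ∀ a ∈ s, f a ∈ t) :
    ∃ b, #s ≤ #t * #{a ∈ s | f a = b} := by
  rcases t.eq_empty_or_nonempty with rfl | ht
  · exact ⟨Classical.arbitrary β, by simp_all [eq_empty_iff_forall_notMem]⟩
  obtain ⟨b, -, hb⟩ := exists_max_image t (fun b => #{a ∈ s | f a = b}) ht
  refine ⟨b, ?_⟩
  rw [card_eq_sum_card_fiberwise hf]
  exact sum_le_card_nsmul _ _ _ hb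

theorem Finset.card_filter_le_abs_mul_sq_le_sum_sq {α : Type*} (s : Finset α) (g : α → ℝ)
    {t : ℝ} (ht : 0 ≤ t) : #{x ∈ s | t ≤ |g x|} * t ^ 2 ≤ ∑ x ∈ s, g x ^ 2 := by
  calc #{x ∈ s | t ≤ |g x|} * t ^ 2 = ∑ x ∈ s with t ≤ |g x|, t ^ 2 := by simp
    _ ≤ ∑ x ∈ s with t ≤ |g x|, g x ^ 2 := sum_le_sum fun x hx => by
        rw [← sq_abs (g x)]; exact pow_le_pow_left₀ ht (mem_filter.1 hx).2 2
    _ ≤ ∑ x ∈ s, g x ^ 2 := sum_le_sum_of_subset_of_nonneg (filter_subset _ _)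
        fun x _ _ => sq_nonneg _

section Moments

variable {α : Type*} [Fintype α] {f : α → ℝ}

theorem Fintype.sum_fin_succ_pi {β : Type*} [AddCommMonoid β] (D : ℕ)
    (g : (Fin (D + 1) → α) → β) :
    ∑ x, g x = ∑ a, ∑ y : Fin D → α, g (Fin.cons a y) := by
  rw [← Fintype.sum_prod_type']
  exact (Fintype.sum_equiv (Fin.consEquiv _) _ _ fun _ => rfl).symm

theorem sum_sum_comp_eq_zero (hf : ∑ a, f a = 0) (D : ℕ) :
    ∑ x : Fin D → α, ∑ i, f (x i) = 0 := by
  induction D with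
  | zero => simp
  | succ D ih =>
    simp [Fintype.sum_fin_succ_pi, Fin.sum_univ_succ, sum_add_distrib, ih, ← mul_sum, hf]

theorem sum_sq_sum_comp (hf : ∑ a, f a = 0) (D : ℕ) :
    ∑ x : Fin D → α, (∑ i, f (x i)) ^ 2 =
      D * Fintype.card α ^ (D - 1) * ∑ a, f a ^ 2 := by
  induction D with
  | zero => simp
  | succ D ih =>
    have hexpand : ∀ a (y : Fin D → α), (f a + ∑ i, f (y i)) ^ 2 =
        f a ^ 2 + 2 * f a * ∑ i, f (y i) + (∑ i, f (y i)) ^ 2 := fun _ _ => by ring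
    simp only [Fintype.sum_fin_succ_pi, Fin.sum_univ_succ, Fin.cons_zero, Fin.cons_succ, hexpand,
      sum_add_distrib, ← mul_sum, sum_sum_comp_eq_zero hf, ih, sum_const, card_univ,
      Fintype.card_fun, Fintype.card_fin, nsmul_eq_mul, mul_zero, add_zero]
    rcases D with _ | D
    · simp
    · push_cast; ring

end Moments

theorem sum_range_natCast (n : ℕ) : ∑ i ∈ range n, (i : ℝ) = n * (n - 1) / 2 := by
  induction n with
  | zero => simp
  | succ n ih => rw [sum_range_succ, ih]; push_cast; ring

theorem sum_range_natCast_sq (n : ℕ) :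
    ∑ i ∈ range n, (i : ℝ) ^ 2 = n * (n - 1) * (2 * n - 1) / 6 := by
  induction n with
  | zero => simp
  | succ n ih => rw [sum_range_succ, ih]; push_cast; ring

theorem sum_two_mul_sub (n : ℕ) : ∑ a : Fin n, (2 * (a : ℝ) - (n - 1)) = 0 := by
  rw [Fin.sum_univ_eq_sum_range (fun a => 2 * (a : ℝ) - (n - 1)), sum_sub_distrib, ← mul_sum,
    sum_range_natCast]
  simp; ring

theorem sum_two_mul_sub_sq (n : ℕ) :
    ∑ a : Fin n, (2 * (a : ℝ) - (n - 1)) ^ 2 = (n : ℝ) * (n ^ 2 - 1) / 3 := by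
  have hexpand : ∀ a : ℝ,
      (2 * a - ((n : ℝ) - 1)) ^ 2 = 4 * a ^ 2 - 4 * (n - 1) * a + (n - 1) ^ 2 := fun _ => by ring
  rw [Fin.sum_univ_eq_sum_range (fun a => (2 * (a : ℝ) - (n - 1)) ^ 2)]
  simp only [hexpand, sum_add_distrib, sum_sub_distrib, ← mul_sum, sum_range_natCast,
    sum_range_natCast_sq, sum_const, card_range, nsmul_eq_mul]
  ring

noncomputable def centredSum {D n : ℕ} (x : Fin D → Fin n) : ℝ :=
  ∑ i, (2 * (x i : ℝ) - (n - 1))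

theorem centredSum_eq {D n : ℕ} (hn : 1 ≤ n) (x : Fin D → Fin n) :
    centredSum x = 2 * ((∑ i, (x i : ℕ) : ℕ) : ℝ) - ((D * (n - 1) : ℕ) : ℝ) := by
  simp [centredSum, sum_sub_distrib, mul_sum, Nat.cast_sub hn]
  ring

theorem sum_centredSum_sq (d n : ℕ) :
    ∑ x : Fin (d + 1) → Fin n, centredSum x ^ 2 =
      n ^ (d + 1) * ((d + 1) * (n ^ 2 - 1)) / 3 := by
  unfold centredSum
  simp only [sum_sq_sum_comp (sum_two_mul_sub n), sum_two_mul_sub_sq, Fintype.card_fin]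
  push_cast; ring

theorem exists_card_le_card_add_mul_card_level {n : ℕ} (hn : 1 ≤ n) (D v : ℕ) :
    ∃ k, n ^ D ≤
      #{x : Fin D → Fin n | (v : ℝ) ≤ |centredSum x|} + v * #(level (Fin D) n k) := by
  set bad : Finset (Fin D → Fin n) := {x | (v : ℝ) ≤ |centredSum x|}
  set c := D * (n - 1)
  set window := Icc ((c + 2 - v) / 2) ((c + v - 1) / 2)
  -- `window` is the set of levels `k` with `|2k - c| < v`; it has at most `v` elements.
  have hwindow : ∀ x ∈ badᶜ, ∑ i, (x i : ℕ) ∈ window := by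
    intro x hx
    have hlt : |2 * ((∑ i, (x i : ℕ) : ℕ) : ℝ) - (c : ℝ)| < v := by
      simpa [bad, c, centredSum_eq hn] using hx
    replace hlt : |2 * ((∑ i, (x i : ℕ) : ℕ) : ℤ) - (c : ℤ)| < v := by exact_mod_cast hlt
    rw [abs_lt] at hlt
    rw [mem_Icc]
    omega
  obtain ⟨k, hk⟩ := exists_card_le_mul_card_fiber hwindow
  refine ⟨k, ?_⟩
  calc n ^ D = #bad + #badᶜ := by simp [card_add_card_compl]
    _ ≤ #bad + #window * #{x ∈ badᶜ | ∑ i, (x i : ℕ) = k} := by gcongr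
    _ ≤ #bad + v * #(level (Fin D) n k) := by
      gcongr
      · rw [Nat.card_Icc]; omega
      · exact filter_subset_filter _ (subset_univ _)

theorem two_mul_pow_three_le {B D v : ℝ} (hB : 1 ≤ B) (hD : 1 ≤ D) (hv : |v - B| ≤ 1 / 2) :
    2 * v ^ 3 ≤ B * (3 * v ^ 2 - (B ^ 2 - D)) := by
  obtain ⟨hv₁, hv₂⟩ := abs_le.1 hv
  have hw : (v - B) ^ 2 ≤ 1 / 4 := by nlinarith
  have hw' : -(v - B) ^ 3 ≤ 1 / 8 := by nlinarith
  have hident : B * (3 * v ^ 2 - (B ^ 2 - D)) - 2 * v ^ 3 =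
      B * D - 3 * B * (v - B) ^ 2 - 2 * (v - B) ^ 3 := by ring
  nlinarith

theorem two_mul_le_of_cover_of_chebyshev {N b L v V B : ℝ} (hN : 0 < N) (hv : 0 < v)
    (hB : 0 < B) (hcover : N ≤ b + v * L) (hcheb : b * v ^ 2 ≤ N * V / 3)
    (hkey : 2 * v ^ 3 ≤ B * (3 * v ^ 2 - V)) : 2 * N ≤ 3 * B * L := by
  have hwindow : N * (3 * v ^ 2 - V) ≤ 3 * v ^ 3 * L := by nlinarith
  have : 2 * N * v ^ 3 ≤ 3 * B * L * v ^ 3 := by nlinarith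
  exact le_of_mul_le_mul_right this (by positivity)

theorem exists_le_card_level {n : ℕ} (hn : 1 ≤ n) (d : ℕ) :
    ∃ k, 2 / 3 * (n : ℝ) ^ d / √(d + 1) ≤ #(level (Fin (d + 1)) n k) := by
  have hn₀ : (1 : ℝ) ≤ n := by exact_mod_cast hn
  have hD : (1 : ℝ) ≤ d + 1 := by linarith [d.cast_nonneg (α := ℝ)]
  set B : ℝ := n * √(d + 1)
  have hB : 1 ≤ B := one_le_mul_of_one_le_of_one_le hn₀ (Real.one_le_sqrt.2 hD)
  set v := ⌊B + 1 / 2⌋₊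
  have hv : |(v : ℝ) - B| ≤ 1 / 2 := by
    have := Nat.floor_le (by linarith : 0 ≤ B + 1 / 2)
    have := Nat.lt_floor_add_one (B + 1 / 2)
    rw [abs_le]; constructor <;> linarith
  have hv₀ : 0 < (v : ℝ) := by linarith [(abs_le.1 hv).1]
  obtain ⟨k, hk⟩ := exists_card_le_card_add_mul_card_level hn (d + 1) v
  refine ⟨k, ?_⟩
  have hcover : (n : ℝ) ^ (d + 1) ≤
      #{x : Fin (d + 1) → Fin n | (v : ℝ) ≤ |centredSum x|} +
        v * (#(level (Fin (d + 1)) n k) : ℝ) := by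
    exact_mod_cast hk
  have hcheb := card_filter_le_abs_mul_sq_le_sum_sq univ
    (centredSum : (Fin (d + 1) → Fin n) → ℝ) hv₀.le
  have hB2 : (d + 1) * ((n : ℝ) ^ 2 - 1) = B ^ 2 - (d + 1) := by
    rw [mul_pow, Real.sq_sqrt (by positivity)]; ring
  rw [sum_centredSum_sq, hB2] at hcheb
  have h := two_mul_le_of_cover_of_chebyshev (by positivity) hv₀ (by positivity) hcover hcheb
    (two_mul_pow_three_le hB hD hv)
  rw [pow_succ] at h
  rw [div_le_iff₀ (by positivity)]
  nlinarith

theorem stmt11_general (d n : ℕ) (hn : 1 ≤ n) :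
    (2 : ℝ) ^ ((2 / 3 : ℝ) * (n : ℝ) ^ d / Real.sqrt (d + 1)) ≤ (Pnum d n : ℝ) := by
  obtain ⟨k, hk⟩ := exists_le_card_level hn d
  calc (2 : ℝ) ^ ((2 / 3 : ℝ) * (n : ℝ) ^ d / Real.sqrt (d + 1))
      ≤ (2 : ℝ) ^ (#(level (Fin (d + 1)) n k) : ℝ) :=
        Real.rpow_le_rpow_of_exponent_le one_le_two hk
    _ = (2 ^ #(level (Fin (d + 1)) n k) : ℕ) := by norm_cast
    _ ≤ Pnum d n := by exact_mod_cast two_pow_card_le_Pnum (isAntichain_level _ n k)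

/-- For every `d ≥ 1` and `n ≥ 1`, `P_d(n) ≥ 2^{(2/3)·n^d/√(d+1)}`. -/
theorem stmt11 (d n : ℕ) (hd : 1 ≤ d) (hn : 1 ≤ n) :
    (2 : ℝ) ^ ((2 / 3 : ℝ) * (n : ℝ) ^ d / Real.sqrt (d + 1)) ≤ (Pnum d n : ℝ) :=
  stmt11_general d n hn
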